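/- arXiv:1607.05008 — 5 statements merged into one kernel-verified Lean document; each statement's English description precedes it below -/
import Mathlib

section
/- Let P : ℕ → ℝ be any sequence of expected partitioning costs and let C be the dual-pivot quickselect cost array defined from P by the standard recurrence. Then the costs are symmetric in the rank: for every n ∈ ℕ and every integer j with 1 ≤ j ≤ n one has C(n,j) = C(n, n−j+1). -/
open Finset

/-- Harmonic numbers `H_n = ∑_{k=1}^n 1/k`. -/
noncomputable def H (n : ℕ) : ℝ := ∑ k ∈ Finset.Icc 1 n, (1 : ℝ) / k

/-- Alternating harmonic numbers `H^alt_n = ∑_{k=1}^n (-1)^k/k`. -/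
noncomputable def Halt (n : ℕ) : ℝ := ∑ k ∈ Finset.Icc 1 n, (-1 : ℝ) ^ k / k

/-- The dual-pivot quickselect cost array defined from expected partitioning
costs `P` by the standard recurrence:  `C(n,j) = 0` whenever `n ≤ 1` or `j < 1`
or `j > n`; and for `n ≥ 2` and `1 ≤ j ≤ n`,
`C(n,j) = P(n) + (2/(n(n−1)))·( ∑_{s=j}^{n−2} (n−1−s)·C(s,j)
  + ∑_{m=1}^{n−2} ∑_{s=max(0,j−m−1)}^{min(j−2, n−m−2)} C(m, j−s−1)
  + ∑_{ℓ=n−j+1}^{n−2} (n−1−ℓ)·C(ℓ, n−j+1) )`.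
(The `attach` is only needed for the termination proof.) -/
noncomputable def qsCost (P : ℕ → ℝ) : ℕ → ℤ → ℝ
  | n, j =>
    if n ≤ 1 ∨ j < 1 ∨ (n : ℤ) < j then 0
    else
      P n + 2 / ((n : ℝ) * ((n : ℝ) - 1)) *
        ((∑ s ∈ (Finset.Icc j.toNat (n - 2)).attach,
            ((n : ℝ) - 1 - (s : ℕ)) * qsCost P (s : ℕ) j) +
         (∑ m ∈ (Finset.Icc 1 (n - 2)).attach,
            ∑ s ∈ Finset.Icc (max 0 (j - ((m : ℕ) : ℤ) - 1))
                (min (j - 2) ((n : ℤ) - ((m : ℕ) : ℤ) - 2)),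
              qsCost P (m : ℕ) (j - s - 1)) +
         (∑ l ∈ (Finset.Icc ((n : ℤ) - j + 1).toNat (n - 2)).attach,
            ((n : ℝ) - 1 - (l : ℕ)) * qsCost P (l : ℕ) ((n : ℤ) - j + 1)))
  termination_by n j => n
  decreasing_by
    · have hs := s.2; simp only [Finset.mem_Icc] at hs; omega
    · have hm := m.2; simp only [Finset.mem_Icc] at hm; omega
    · have hl := l.2; simp only [Finset.mem_Icc] at hl; omega

/-- The dual-pivot quickselect costs are symmetric in the rank:
for every `n` and every integer `j` with `1 ≤ j ≤ n`,
`C(n,j) = C(n, n−j+1)`. -/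
theorem qsCost_symm (P : ℕ → ℝ) (n : ℕ) (j : ℤ)
    (hj1 : 1 ≤ j) (hjn : j ≤ (n : ℤ)) :
    qsCost P n j = qsCost P n ((n : ℤ) - j + 1) := by
  revert hj1 hjn
  induction n using Nat.strong_induction_on generalizing j with
  | _ n IH =>
  intro hj1 hjn
  by_cases hn : n ≤ 1
  · have hn1 : n = 1 := by omega
    subst hn1
    have hj : j = 1 := by omega
    subst hj
    norm_num
  · have h1 : ¬(n ≤ 1 ∨ j < 1 ∨ (n : ℤ) < j) := by omega
    have h2 : ¬(n ≤ 1 ∨ (n : ℤ) - j + 1 < 1 ∨ (n : ℤ) < (n : ℤ) - j + 1) := by omega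
    conv_lhs => rw [qsCost]
    conv_rhs => rw [qsCost]
    rw [if_neg h1, if_neg h2]
    have hjj : (n : ℤ) - ((n : ℤ) - j + 1) + 1 = j := by ring
    rw [hjj]
    have hB :
        (∑ m ∈ (Finset.Icc 1 (n - 2)).attach,
            ∑ s ∈ Finset.Icc (max 0 (j - ((m : ℕ) : ℤ) - 1))
                (min (j - 2) ((n : ℤ) - ((m : ℕ) : ℤ) - 2)),
              qsCost P (m : ℕ) (j - s - 1)) =
        (∑ m ∈ (Finset.Icc 1 (n - 2)).attach,
            ∑ s ∈ Finset.Icc (max 0 ((n : ℤ) - j + 1 - ((m : ℕ) : ℤ) - 1))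
                (min ((n : ℤ) - j + 1 - 2) ((n : ℤ) - ((m : ℕ) : ℤ) - 2)),
              qsCost P (m : ℕ) ((n : ℤ) - j + 1 - s - 1)) := by
      apply Finset.sum_congr rfl
      intro m _
      have hm := m.2
      simp only [Finset.mem_Icc] at hm
      refine Finset.sum_nbij' (i := fun s => (n : ℤ) - ((m : ℕ) : ℤ) - 2 - s)
        (j := fun s => (n : ℤ) - ((m : ℕ) : ℤ) - 2 - s) ?_ ?_ ?_ ?_ ?_
      · intro s hs
        simp only [Finset.mem_Icc] at hs ⊢
        omega
      · intro s hs
        simp only [Finset.mem_Icc] at hs ⊢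
        omega
      · intro s _; ring
      · intro s _; ring
      · intro s hs
        simp only [Finset.mem_Icc] at hs
        have hmn : (m : ℕ) < n := by omega
        have := IH (m : ℕ) hmn (j - s - 1) (by omega) (by omega)
        rw [this]
        congr 1
        ring
    rw [hB]
    ring
end

section
/- Let P : ℕ → ℝ be a sequence of expected partitioning costs with P(0) = P(1) = 0, and suppose there exist constants A > 0 and d ∈ ℕ with |P(n)| ≤ A·(n+1)^d for all n. Let C be the dual-pivot quickselect cost array defined from P by the standard recurrence. Then for every real z with |z| < 1 the series F(z) = ∑_{n≥0} (∑_{j=1}^n C(n,j))·z^n and G(z) = ∑_{n≥2} n²(n−1)·P(n)·z^{n−2} converge absolutely, the function F is twice differentiable on (−1,1), and for all z ∈ (−1,1) one has F''(z) = G(z) + (6/(1−z)²)·F(z). -/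
/-!
Summing the recurrence over `j`, each of the three recursive branches contributes
`∑_{m ≤ n-2} (n-1-m) T(m)` to the grand total `T(n) = ∑_j C(n,j)`, so that
`n(n-1) T(n) = n²(n-1) P(n) + 6 ∑_{m ≤ n-2} (n-1-m) T(m)`. Since `∑ (k+1) zᵏ = 1/(1-z)²`,
the convolution on the right is the Cauchy product of `F` with `1/(1-z)²`, and comparing
coefficients gives `F'' = G + 6 F/(1-z)²`. All series converge on `(-1,1)` and may be
differentiated termwise because `T(n) = O(n^{d+3})`, by induction on `n`.
-/

open Finset

lemma summable_add_one_pow_mul_geometric (K : ℕ) {r : ℝ} (hr : ‖r‖ < 1) :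
    Summable fun n : ℕ => ((n : ℝ) + 1) ^ K * r ^ n := by
  simp_rw [add_pow, one_pow, mul_one, sum_mul]
  refine summable_sum fun i _ => ?_
  exact ((summable_pow_mul_geometric_of_norm_lt_one i hr).mul_left (K.choose i : ℝ)).congr
    fun n => by ring

def PolyGrowth (a : ℕ → ℝ) : Prop := ∃ C : ℝ, ∃ K : ℕ, ∀ n, |a n| ≤ C * ((n : ℝ) + 1) ^ K

def derivCoeff (a : ℕ → ℝ) (n : ℕ) : ℝ := (n + 1) * a (n + 1)

lemma derivCoeff_derivCoeff (a : ℕ → ℝ) (n : ℕ) :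
    derivCoeff (derivCoeff a) n = ((n : ℝ) + 1) * ((n : ℝ) + 2) * a (n + 2) := by
  simp only [derivCoeff]; push_cast; ring

lemma hasSum_sum_range_mul_div_one_sub_sq {a : ℕ → ℝ} {z : ℝ}
    (ha : Summable fun n => ‖a n * z ^ n‖) (hz : ‖z‖ < 1) :
    HasSum (fun n => (∑ m ∈ range (n + 1), ((n : ℝ) + 1 - m) * a m) * z ^ n)
      ((∑' n, a n * z ^ n) / (1 - z) ^ 2) := by
  have hz1 : 1 - z ≠ 0 := sub_ne_zero.mpr (by rintro rfl; norm_num at hz)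
  have hgeom : HasSum (fun n : ℕ => ((n : ℝ) + 1) * z ^ n) (1 / (1 - z) ^ 2) := by
    have h := (hasSum_coe_mul_geometric_of_norm_lt_one hz).add (hasSum_geometric_of_norm_lt_one hz)
    rw [show z / (1 - z) ^ 2 + (1 - z)⁻¹ = 1 / (1 - z) ^ 2 by field_simp; ring] at h
    simpa only [add_mul, one_mul] using h
  have hnorm : Summable fun n : ℕ => ‖((n : ℝ) + 1) * z ^ n‖ :=
    (summable_add_one_pow_mul_geometric 1 (r := ‖z‖) (by simpa)).congr fun n => by
      rw [norm_mul, norm_pow, Real.norm_of_nonneg (by positivity : (0 : ℝ) ≤ n + 1), pow_one]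
  have hprod := hasSum_sum_range_mul_of_summable_norm ha hnorm
  rw [hgeom.tsum_eq, ← div_eq_mul_one_div] at hprod
  refine hprod.congr_fun fun n => ?_
  rw [sum_mul]
  refine sum_congr rfl fun m hm => ?_
  have hmn : m ≤ n := Nat.lt_succ_iff.mp (mem_range.mp hm)
  rw [Nat.cast_sub hmn]
  nth_rw 2 [← Nat.add_sub_cancel' hmn]
  rw [pow_add]
  ring

namespace PolyGrowth

variable {a : ℕ → ℝ}

lemma summable_abs_mul_pow (ha : PolyGrowth a) {z : ℝ} (hz : |z| < 1) :
    Summable fun n => |a n * z ^ n| := by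
  obtain ⟨C, K, hC⟩ := ha
  refine .of_nonneg_of_le (fun n => abs_nonneg _) (fun n => ?_)
    ((summable_add_one_pow_mul_geometric K (r := |z|) (by simpa)).mul_left C)
  rw [abs_mul, abs_pow, ← mul_assoc]
  exact mul_le_mul_of_nonneg_right (hC n) (by positivity)

lemma natCast_mul (ha : PolyGrowth a) : PolyGrowth fun n => n * a n := by
  obtain ⟨C, K, hC⟩ := ha
  have hC0 : 0 ≤ C := by simpa using (abs_nonneg _).trans (hC 0)
  refine ⟨C, K + 1, fun n => ?_⟩
  calc |(n : ℝ) * a n| ≤ ((n : ℝ) + 1) * (C * ((n : ℝ) + 1) ^ K) := by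
        rw [abs_mul, Nat.abs_cast]
        exact mul_le_mul (by linarith) (hC n) (abs_nonneg _) (by positivity)
    _ = C * ((n : ℝ) + 1) ^ (K + 1) := by ring

lemma comp_succ (ha : PolyGrowth a) : PolyGrowth fun n => a (n + 1) := by
  obtain ⟨C, K, hC⟩ := ha
  have hC0 : 0 ≤ C := by simpa using (abs_nonneg _).trans (hC 0)
  refine ⟨C * 2 ^ K, K, fun n => (hC (n + 1)).trans ?_⟩
  rw [mul_assoc, ← mul_pow]
  push_cast
  gcongr
  linarith [n.cast_nonneg (α := ℝ)]

theorem _root_.polyGrowth_derivCoeff (ha : PolyGrowth a) : PolyGrowth (derivCoeff a) := by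
  have h := ha.natCast_mul.comp_succ
  push_cast at h
  exact h

theorem hasDerivAt_tsum (ha : PolyGrowth a) {z : ℝ} (hz : |z| < 1) :
    HasDerivAt (fun y => ∑' n, a n * y ^ n) (∑' n, derivCoeff a n * z ^ n) z := by
  obtain ⟨r, hzr, hr1⟩ := exists_between hz
  have hr0 : 0 < r := (abs_nonneg z).trans_lt hzr
  have hr : |r| < 1 := by rwa [abs_of_pos hr0]
  have hz_mem : z ∈ Metric.ball (0 : ℝ) r := by rwa [mem_ball_zero_iff]
  have hu : Summable fun n => |a n| * (n * r ^ (n - 1)) := by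
    refine (summable_nat_add_iff 1).mp
      (((polyGrowth_derivCoeff ha).summable_abs_mul_pow hr).congr fun n => ?_)
    rw [derivCoeff, abs_mul, abs_mul, abs_pow, abs_of_pos hr0,
      abs_of_nonneg (by positivity : (0 : ℝ) ≤ n + 1)]
    push_cast
    ring_nf
  have hbound (n : ℕ) (y : ℝ) (hy : y ∈ Metric.ball (0 : ℝ) r) :
      ‖a n * (n * y ^ (n - 1))‖ ≤ |a n| * (n * r ^ (n - 1)) := by
    rw [mem_ball_zero_iff] at hy
    rw [norm_mul, norm_mul, norm_pow, RCLike.norm_natCast, Real.norm_eq_abs]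
    gcongr
  refine (hasDerivAt_tsum_of_isPreconnected hu Metric.isOpen_ball
    (convex_ball (0 : ℝ) r).isPreconnected
    (fun n y _ => (hasDerivAt_pow n y).const_mul (a n)) hbound hz_mem
    (ha.summable_abs_mul_pow hz).of_abs hz_mem).congr_deriv ?_
  rw [(Summable.of_norm_bounded hu fun n => hbound n z hz_mem).tsum_eq_zero_add]
  simp only [derivCoeff, Nat.cast_zero, zero_mul, mul_zero, zero_add, Nat.add_sub_cancel]
  exact tsum_congr fun n => by push_cast; ring

theorem hasDerivAt_deriv_tsum (ha : PolyGrowth a) {z : ℝ} (hz : |z| < 1) :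
    HasDerivAt (deriv fun y => ∑' n, a n * y ^ n)
      (∑' n, derivCoeff (derivCoeff a) n * z ^ n) z := by
  refine ((polyGrowth_derivCoeff ha).hasDerivAt_tsum hz).congr_of_eventuallyEq ?_
  filter_upwards [continuous_abs.continuousAt.eventually_lt continuousAt_const hz] with y hy
  exact (ha.hasDerivAt_tsum hy).deriv

lemma summable_abs_mul_pow_sub_two (ha : PolyGrowth a) {z : ℝ} (hz : |z| < 1) :
    Summable fun n : ℕ => |(n : ℝ) * ((n : ℝ) - 1) * a n * z ^ (n - 2)| := by
  refine (summable_nat_add_iff 2).mp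
    (((polyGrowth_derivCoeff (polyGrowth_derivCoeff ha)).summable_abs_mul_pow hz).congr fun n => ?_)
  rw [derivCoeff_derivCoeff, Nat.add_sub_cancel]
  push_cast
  ring_nf

lemma hasSum_mul_pow_sub_two (ha : PolyGrowth a) {z : ℝ} (hz : |z| < 1) :
    HasSum (fun n : ℕ => (n : ℝ) * ((n : ℝ) - 1) * a n * z ^ (n - 2))
      (∑' n, derivCoeff (derivCoeff a) n * z ^ n) := by
  refine (hasSum_nat_add_iff' 2).mp ?_
  simp only [sum_range_succ, range_zero, sum_empty, Nat.cast_zero, Nat.cast_one, zero_mul,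
    sub_self, mul_zero, zero_add, sub_zero]
  refine ((polyGrowth_derivCoeff (polyGrowth_derivCoeff ha)).summable_abs_mul_pow
    hz).of_abs.hasSum.congr_fun fun n => ?_
  rw [derivCoeff_derivCoeff, Nat.add_sub_cancel]
  push_cast
  ring

end PolyGrowth

section GrowthBound

lemma sum_range_add_one_sq (n : ℕ) :
    ∑ m ∈ range (n + 1), ((m : ℝ) + 1) ^ 2 = ((n : ℝ) + 1) * ((n : ℝ) + 2) * (2 * n + 3) / 6 := by
  induction n with
  | zero => norm_num
  | succ n ih => rw [sum_range_succ, ih]; push_cast; ring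

lemma sum_range_sub_mul_add_one_sq (n : ℕ) :
    ∑ m ∈ range (n + 1), ((n : ℝ) + 1 - m) * ((m : ℝ) + 1) ^ 2 =
      ((n : ℝ) + 1) * ((n : ℝ) + 2) ^ 2 * ((n : ℝ) + 3) / 12 := by
  induction n with
  | zero => norm_num
  | succ n ih =>
    have hsplit : ∑ m ∈ range (n + 1), (((n + 1 : ℕ) : ℝ) + 1 - m) * ((m : ℝ) + 1) ^ 2 =
        ∑ m ∈ range (n + 1), ((n : ℝ) + 1 - m) * ((m : ℝ) + 1) ^ 2 +
          ∑ m ∈ range (n + 1), ((m : ℝ) + 1) ^ 2 := by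
      rw [← sum_add_distrib]; push_cast; ring_nf
    rw [sum_range_succ, hsplit, ih, sum_range_add_one_sq]
    push_cast; ring

variable {T : ℕ → ℝ}

lemma abs_sum_range_sub_mul_le {B : ℝ} {K n : ℕ} (hB : 0 ≤ B)
    (hT : ∀ m ≤ n, |T m| ≤ B * ((m : ℝ) + 1) ^ (K + 2)) :
    |∑ m ∈ range (n + 1), ((n : ℝ) + 1 - m) * T m| ≤
      B * ((n : ℝ) + 1) ^ K * (((n : ℝ) + 1) * ((n : ℝ) + 2) ^ 2 * ((n : ℝ) + 3) / 12) := by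
  rw [← sum_range_sub_mul_add_one_sq, mul_sum]
  refine (abs_sum_le_sum_abs _ _).trans (sum_le_sum fun m hm => ?_)
  have hmn : (m : ℝ) ≤ n := by exact_mod_cast Nat.lt_succ_iff.mp (mem_range.mp hm)
  have hw : 0 ≤ (n : ℝ) + 1 - m := by linarith
  calc |((n : ℝ) + 1 - m) * T m| ≤ ((n : ℝ) + 1 - m) * (B * ((m : ℝ) + 1) ^ (K + 2)) := by
        rw [abs_mul, abs_of_nonneg hw]
        exact mul_le_mul_of_nonneg_left (hT m (by exact_mod_cast hmn)) hw
    _ = B * ((m : ℝ) + 1) ^ K * (((n : ℝ) + 1 - m) * ((m : ℝ) + 1) ^ 2) := by ring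
    _ ≤ B * ((n : ℝ) + 1) ^ K * (((n : ℝ) + 1 - m) * ((m : ℝ) + 1) ^ 2) := by
        gcongr

theorem abs_le_of_recurrence {p : ℕ → ℝ} {A : ℝ} {d : ℕ} (hT0 : T 0 = 0) (hT1 : T 1 = 0)
    (hrec : ∀ n : ℕ, ((n : ℝ) + 2) * ((n : ℝ) + 1) * T (n + 2) =
      ((n : ℝ) + 2) ^ 2 * ((n : ℝ) + 1) * p (n + 2) +
        6 * ∑ m ∈ range (n + 1), ((n : ℝ) + 1 - m) * T m)
    (hp : ∀ n, |p n| ≤ A * ((n : ℝ) + 1) ^ d) (n : ℕ) :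
    |T n| ≤ 2 * A * ((n : ℝ) + 1) ^ (d + 3) := by
  have hA : 0 ≤ A := by simpa using (abs_nonneg _).trans (hp 0)
  -- The weights `(n+1-m)(m+1)²` sum to `(n+1)(n+2)²(n+3)/12`, so the convolution term
  -- contributes at most half of the bound for `T (n+2)`; `P` contributes the other half.
  induction n using Nat.strong_induction_on with | _ n ih =>
  match n with
  | 0 => rw [hT0, abs_zero]; positivity
  | 1 => rw [hT1, abs_zero]; positivity
  | n + 2 =>
    have hS := abs_sum_range_sub_mul_le (n := n) (K := d + 1) (by positivity : 0 ≤ 2 * A)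
      fun m hm => ih m (by omega)
    have hpn := hp (n + 2)
    push_cast at hpn ⊢
    rw [show (n : ℝ) + 2 + 1 = n + 3 by ring] at hpn ⊢
    have hw : ((n : ℝ) + 1) ^ (d + 1) ≤ ((n : ℝ) + 3) * ((n : ℝ) + 3) ^ d := by
      rw [← pow_succ']; gcongr; linarith
    have hmain : ((n : ℝ) + 2) * ((n : ℝ) + 1) * |T (n + 2)| ≤
        ((n : ℝ) + 2) * ((n : ℝ) + 1) * (2 * A * ((n : ℝ) + 3) ^ (d + 3)) := by
      calc ((n : ℝ) + 2) * ((n : ℝ) + 1) * |T (n + 2)|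
          = |((n : ℝ) + 2) ^ 2 * ((n : ℝ) + 1) * p (n + 2) +
              6 * ∑ m ∈ range (n + 1), ((n : ℝ) + 1 - m) * T m| := by
            rw [← hrec, abs_mul,
              abs_of_pos (by positivity : (0 : ℝ) < ((n : ℝ) + 2) * ((n : ℝ) + 1))]
        _ ≤ ((n : ℝ) + 2) ^ 2 * ((n : ℝ) + 1) * (A * ((n : ℝ) + 3) ^ d) +
              6 * (2 * A * ((n : ℝ) + 1) ^ (d + 1) *
                (((n : ℝ) + 1) * ((n : ℝ) + 2) ^ 2 * ((n : ℝ) + 3) / 12)) := by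
            refine (abs_add_le _ _).trans (add_le_add ?_ ?_)
            · rw [abs_mul, abs_of_pos (by positivity)]; gcongr
            · rw [abs_mul, abs_of_pos (by norm_num)]; gcongr
        _ ≤ ((n : ℝ) + 2) * ((n : ℝ) + 1) * (((n : ℝ) + 2) + ((n : ℝ) + 2) * ((n : ℝ) + 3) ^ 2) *
              (A * ((n : ℝ) + 3) ^ d) := by
            linear_combination mul_le_mul_of_nonneg_left hw (by positivity : (0 : ℝ) ≤
              A * ((n : ℝ) + 1) * ((n : ℝ) + 2) ^ 2 * ((n : ℝ) + 3))
        _ ≤ ((n : ℝ) + 2) * ((n : ℝ) + 1) * (2 * ((n : ℝ) + 3) ^ 3) * (A * ((n : ℝ) + 3) ^ d) := by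
            gcongr; nlinarith [sq_nonneg ((n : ℝ) + 3)]
        _ = ((n : ℝ) + 2) * ((n : ℝ) + 1) * (2 * A * ((n : ℝ) + 3) ^ (d + 3)) := by ring
    exact le_of_mul_le_mul_left hmain (by positivity)

end GrowthBound

noncomputable def qsCostTotal (P : ℕ → ℝ) (n : ℕ) : ℝ := ∑ j ∈ Icc (1 : ℤ) n, qsCost P n j

section QuickselectRecurrence

variable (P : ℕ → ℝ)

lemma qsCost_eq_zero {n : ℕ} {j : ℤ} (h : n ≤ 1 ∨ j < 1 ∨ (n : ℤ) < j) : qsCost P n j = 0 := by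
  rw [qsCost, if_pos h]

lemma qsCost_eq {n : ℕ} {j : ℤ} (hn : 2 ≤ n) (hj : j ∈ Icc (1 : ℤ) n) :
    qsCost P n j =
      P n + 2 / ((n : ℝ) * ((n : ℝ) - 1)) *
        ((∑ s ∈ Icc j.toNat (n - 2), ((n : ℝ) - 1 - s) * qsCost P s j) +
         (∑ m ∈ Icc (1 : ℕ) (n - 2),
            ∑ s ∈ Icc (max 0 (j - m - 1)) (min (j - 2) ((n : ℤ) - m - 2)),
              qsCost P m (j - s - 1)) +
         (∑ l ∈ Icc ((n : ℤ) - j + 1).toNat (n - 2),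
            ((n : ℝ) - 1 - l) * qsCost P l ((n : ℤ) - j + 1))) := by
  rw [mem_Icc] at hj
  rw [qsCost, if_neg (by omega), sum_attach _ (fun (s : ℕ) => ((n : ℝ) - 1 - s) * qsCost P s j),
    sum_attach _ (fun (m : ℕ) => ∑ s ∈ Icc (max 0 (j - m - 1)) (min (j - 2) ((n : ℤ) - m - 2)),
      qsCost P m (j - s - 1)),
    sum_attach _ (fun (l : ℕ) => ((n : ℝ) - 1 - l) * qsCost P l ((n : ℤ) - j + 1))]

lemma qsCostTotal_of_le_one {n : ℕ} (hn : n ≤ 1) : qsCostTotal P n = 0 :=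
  sum_eq_zero fun _ _ => qsCost_eq_zero P (Or.inl hn)

lemma sum_qsCost_leftBranch (n : ℕ) :
    ∑ j ∈ Icc (1 : ℤ) n, ∑ s ∈ Icc j.toNat (n - 2), ((n : ℝ) - 1 - s) * qsCost P s j =
      ∑ s ∈ range (n - 1), ((n : ℝ) - 1 - s) * qsCostTotal P s := by
  rw [sum_comm' (t' := range (n - 1)) (s' := fun s => Icc (1 : ℤ) s)
    (by intro j s; simp only [mem_Icc, mem_range]; omega)]
  simp only [qsCostTotal, mul_sum]

lemma sum_qsCost_rightBranch (n : ℕ) :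
    ∑ j ∈ Icc (1 : ℤ) n, ∑ l ∈ Icc ((n : ℤ) - j + 1).toNat (n - 2),
        ((n : ℝ) - 1 - l) * qsCost P l ((n : ℤ) - j + 1) =
      ∑ s ∈ range (n - 1), ((n : ℝ) - 1 - s) * qsCostTotal P s := by
  rw [← sum_qsCost_leftBranch]
  exact sum_nbij' (fun j => n + 1 - j) (fun j => n + 1 - j)
    (by intro j hj; simp only [mem_Icc] at hj ⊢; omega)
    (by intro j hj; simp only [mem_Icc] at hj ⊢; omega)
    (by intro j _; ring) (by intro j _; ring) (by intro j _; ring_nf)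

lemma sum_qsCost_middleBranch (n : ℕ) :
    ∑ j ∈ Icc (1 : ℤ) n, ∑ m ∈ Icc (1 : ℕ) (n - 2),
        ∑ s ∈ Icc (max 0 (j - m - 1)) (min (j - 2) ((n : ℤ) - m - 2)), qsCost P m (j - s - 1) =
      ∑ s ∈ range (n - 1), ((n : ℝ) - 1 - s) * qsCostTotal P s := by
  have hshift (m : ℕ) (s : ℤ) :
      ∑ j ∈ Icc (s + 2) (s + m + 1), qsCost P m (j - s - 1) = qsCostTotal P m :=
    sum_nbij' (fun j => j - s - 1) (fun k => k + s + 1)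
      (by intro j hj; simp only [mem_Icc] at hj ⊢; omega)
      (by intro j hj; simp only [mem_Icc] at hj ⊢; omega)
      (by intro j _; ring) (by intro j _; ring) (fun _ _ => rfl)
  have hfixed (m : ℕ) (hm : m ∈ Icc 1 (n - 2)) :
      ∑ j ∈ Icc (1 : ℤ) n,
          ∑ s ∈ Icc (max 0 (j - m - 1)) (min (j - 2) ((n : ℤ) - m - 2)), qsCost P m (j - s - 1) =
        ((n : ℝ) - 1 - m) * qsCostTotal P m := by
    rw [mem_Icc] at hm
    -- the admissible `(j, s)` are exactly `0 ≤ s ≤ n - m - 2` with `1 ≤ j - s - 1 ≤ m`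
    rw [sum_comm' (t' := Icc (0 : ℤ) (n - m - 2)) (s' := fun s => Icc (s + 2) (s + m + 1))
      (by intro j s; simp only [mem_Icc]; omega)]
    simp only [hshift, sum_const, Int.card_Icc, nsmul_eq_mul]
    rw [show ((n : ℤ) - m - 2 + 1 - 0).toNat = n - 1 - m by omega]
    push_cast [show m ≤ n - 1 by omega, show 1 ≤ n by omega]
    ring
  rw [sum_comm, sum_congr rfl hfixed]
  refine sum_subset (fun m hm => by simp only [mem_Icc, mem_range] at hm ⊢; omega) ?_
  intro m hm hm'
  simp only [mem_Icc, mem_range] at hm hm'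
  rw [qsCostTotal_of_le_one P (by omega), mul_zero]

theorem qsCostTotal_add_two (n : ℕ) :
    ((n : ℝ) + 2) * ((n : ℝ) + 1) * qsCostTotal P (n + 2) =
      ((n : ℝ) + 2) ^ 2 * ((n : ℝ) + 1) * P (n + 2) +
        6 * ∑ m ∈ range (n + 1), ((n : ℝ) + 1 - m) * qsCostTotal P m := by
  rw [qsCostTotal, sum_congr rfl fun j hj => qsCost_eq P (by omega) hj, sum_add_distrib,
    ← mul_sum, sum_add_distrib, sum_add_distrib, sum_qsCost_leftBranch, sum_qsCost_middleBranch,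
    sum_qsCost_rightBranch, sum_const, Int.card_Icc, nsmul_eq_mul,
    show n + 2 - 1 = n + 1 by omega, show ((n + 2 : ℕ) : ℤ) + 1 - 1 = ((n + 2 : ℕ) : ℤ) by ring,
    Int.toNat_natCast]
  push_cast
  rw [show (n : ℝ) + 2 - 1 = n + 1 by ring]
  field_simp
  ring

end QuickselectRecurrence

theorem grand_average_gf_ode_general (P : ℕ → ℝ)
    (A : ℝ) (d : ℕ) (hPbound : ∀ n : ℕ, |P n| ≤ A * ((n : ℝ) + 1) ^ d) :
    (∀ z ∈ Set.Ioo (-1 : ℝ) 1,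
        Summable (fun n : ℕ => |(∑ j ∈ Finset.Icc (1 : ℤ) (n : ℤ), qsCost P n j) * z ^ n|) ∧
        Summable (fun n : ℕ => |(n : ℝ) ^ 2 * ((n : ℝ) - 1) * P n * z ^ (n - 2)|)) ∧
    (∀ z ∈ Set.Ioo (-1 : ℝ) 1,
        DifferentiableAt ℝ
          (fun z : ℝ => ∑' n : ℕ, (∑ j ∈ Finset.Icc (1 : ℤ) (n : ℤ), qsCost P n j) * z ^ n) z ∧
        DifferentiableAt ℝ
          (deriv (fun z : ℝ =>
            ∑' n : ℕ, (∑ j ∈ Finset.Icc (1 : ℤ) (n : ℤ), qsCost P n j) * z ^ n)) z) ∧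
    (∀ z ∈ Set.Ioo (-1 : ℝ) 1,
        deriv (deriv (fun z : ℝ =>
            ∑' n : ℕ, (∑ j ∈ Finset.Icc (1 : ℤ) (n : ℤ), qsCost P n j) * z ^ n)) z =
          (∑' n : ℕ, (n : ℝ) ^ 2 * ((n : ℝ) - 1) * P n * z ^ (n - 2)) +
          6 / (1 - z) ^ 2 *
            ∑' n : ℕ, (∑ j ∈ Finset.Icc (1 : ℤ) (n : ℤ), qsCost P n j) * z ^ n) := by
  have hT : PolyGrowth (qsCostTotal P) :=
    ⟨2 * A, d + 3, abs_le_of_recurrence (qsCostTotal_of_le_one P zero_le_one)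
      (qsCostTotal_of_le_one P le_rfl) (qsCostTotal_add_two P) hPbound⟩
  have hQ : PolyGrowth fun n => n * P n := PolyGrowth.natCast_mul ⟨A, d, hPbound⟩
  have hGterm (n : ℕ) (z : ℝ) : (n : ℝ) ^ 2 * ((n : ℝ) - 1) * P n * z ^ (n - 2) =
      (n : ℝ) * ((n : ℝ) - 1) * (n * P n) * z ^ (n - 2) := by ring
  simp only [hGterm, ← qsCostTotal.eq_1]
  refine ⟨fun z hz => ⟨hT.summable_abs_mul_pow (abs_lt.mpr hz),
      hQ.summable_abs_mul_pow_sub_two (abs_lt.mpr hz)⟩,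
    fun z hz => ⟨(hT.hasDerivAt_tsum (abs_lt.mpr hz)).differentiableAt,
      (hT.hasDerivAt_deriv_tsum (abs_lt.mpr hz)).differentiableAt⟩, fun z hz => ?_⟩
  have hz := abs_lt.mpr hz
  rw [(hT.hasDerivAt_deriv_tsum hz).deriv, (hQ.hasSum_mul_pow_sub_two hz).tsum_eq]
  have hG := ((polyGrowth_derivCoeff (polyGrowth_derivCoeff hQ)).summable_abs_mul_pow
    hz).of_abs.hasSum
  have hconv := hasSum_sum_range_mul_div_one_sub_sq (hT.summable_abs_mul_pow hz) hz
  rw [div_mul_eq_mul_div, mul_div_assoc, ← (hG.add (hconv.mul_left 6)).tsum_eq]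
  refine tsum_congr fun n => ?_
  rw [derivCoeff_derivCoeff, derivCoeff_derivCoeff]
  push_cast
  linear_combination z ^ n * qsCostTotal_add_two P n

/-- Suppose `P 0 = P 1 = 0` and `|P n| ≤ A·(n+1)^d`.  Let
`F(z) = ∑_{n≥0} (∑_{j=1}^n C(n,j))·z^n` and
`G(z) = ∑_{n≥2} n²(n−1)·P(n)·z^{n−2}` (the coefficients for `n = 0, 1` vanish).
Then for `|z| < 1` both series converge absolutely, `F` is twice differentiable
on `(−1,1)`, and `F''(z) = G(z) + (6/(1−z)²)·F(z)` there. -/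
theorem grand_average_gf_ode (P : ℕ → ℝ) (hP0 : P 0 = 0) (hP1 : P 1 = 0)
    (A : ℝ) (hA : 0 < A) (d : ℕ) (hPbound : ∀ n : ℕ, |P n| ≤ A * ((n : ℝ) + 1) ^ d) :
    (∀ z ∈ Set.Ioo (-1 : ℝ) 1,
        Summable (fun n : ℕ => |(∑ j ∈ Finset.Icc (1 : ℤ) (n : ℤ), qsCost P n j) * z ^ n|) ∧
        Summable (fun n : ℕ => |(n : ℝ) ^ 2 * ((n : ℝ) - 1) * P n * z ^ (n - 2)|)) ∧
    (∀ z ∈ Set.Ioo (-1 : ℝ) 1,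
        DifferentiableAt ℝ
          (fun z : ℝ => ∑' n : ℕ, (∑ j ∈ Finset.Icc (1 : ℤ) (n : ℤ), qsCost P n j) * z ^ n) z ∧
        DifferentiableAt ℝ
          (deriv (fun z : ℝ =>
            ∑' n : ℕ, (∑ j ∈ Finset.Icc (1 : ℤ) (n : ℤ), qsCost P n j) * z ^ n)) z) ∧
    (∀ z ∈ Set.Ioo (-1 : ℝ) 1,
        deriv (deriv (fun z : ℝ =>
            ∑' n : ℕ, (∑ j ∈ Finset.Icc (1 : ℤ) (n : ℤ), qsCost P n j) * z ^ n)) z =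
          (∑' n : ℕ, (n : ℝ) ^ 2 * ((n : ℝ) - 1) * P n * z ^ (n - 2)) +
          6 / (1 - z) ^ 2 *
            ∑' n : ℕ, (∑ j ∈ Finset.Icc (1 : ℤ) (n : ℤ), qsCost P n j) * z ^ n) :=
  grand_average_gf_ode_general P A d hPbound
end

section
/- Define g : (−1,1) → ℝ by g(z) = 9/(4(1−z)²) − (log(1−z))²/(12(1−z)) + L₂(z)/(6(1−z)) − 121/(54(1−z)) + 7·log(1−z)/(3(1−z)) + (1/(18(1−z)))·log((1+z)/(1−z)) − 1/72 − (1/72)(1−z) − (1/144)(1−z)²·log((1+z)/(1−z)) + (1/54)(1−z)². Then there exists a real sequence (c_n)_{n≥0} such that for every real z with |z| < 1 the series ∑_{n≥0} c_n·z^n converges to g(z), and for every n ≥ 3, c_n = (9/4)·n − (1/12)·∑_{k=1}^{n−1} H_k/(n−k) + (1/6)·∑_{k=2}^n H^alt_{k−1}/k − (41/18)·H_n − (1/18)·H^alt_n + 1/108 − ( 1/(72(n−2)) if n is odd ) + ( 1/(36(n−1)) if n is even ) − ( 1/(72·n) if n is odd ). (c_n is the average number of key comparisons of dual-pivot quickselect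 with the 'Clairvoyant' partitioning strategy when selecting the smallest element of n elements.) -/
/-!
Each summand of `clairvoyantSmallestGF` is a product of elementary power series on `(-1, 1)`:
`(1 - z)⁻¹`, `-log (1 - z) = ∑ zⁿ / n`, `-log (1 + z) = ∑ (-z)ⁿ / n`, polynomials, and `L2`, the
termwise integral of `log (1 + t) / (1 - t) = -∑ Halt n * tⁿ`. Convergence on the whole interval
already forces absolute convergence, so Cauchy products are available; dividing by `1 - z` takes
partial sums, which produces the harmonic sums. For `n ≥ 3` the polynomial part drops out, and the
second difference of the coefficients of `log ((1 + z) / (1 - z))` (`2 / n` for odd `n`, else `0`)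
gives the parity terms.
-/

open Finset

/-- `L₂(z) = −∫₀^z log(1+t)/(1−t) dt`. -/
noncomputable def L2 (z : ℝ) : ℝ := -∫ t in (0 : ℝ)..z, Real.log (1 + t) / (1 - t)

/-- The generating function of the cost of selecting the smallest element with
the "Clairvoyant" partitioning strategy. -/
noncomputable def clairvoyantSmallestGF (z : ℝ) : ℝ :=
  9 / (4 * (1 - z) ^ 2)
  - Real.log (1 - z) ^ 2 / (12 * (1 - z))
  + L2 z / (6 * (1 - z))
  - 121 / (54 * (1 - z))
  + 7 * Real.log (1 - z) / (3 * (1 - z))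
  + 1 / (18 * (1 - z)) * Real.log ((1 + z) / (1 - z))
  - 1 / 72
  - 1 / 72 * (1 - z)
  - 1 / 144 * (1 - z) ^ 2 * Real.log ((1 + z) / (1 - z))
  + 1 / 54 * (1 - z) ^ 2

open Polynomial Real

def HasGenFun (a : ℕ → ℝ) (f : ℝ → ℝ) : Prop :=
  ∀ z : ℝ, |z| < 1 → HasSum (fun n => a n * z ^ n) (f z)

theorem hasGenFun_one_sub_inv : HasGenFun (fun _ => 1) (fun z => (1 - z)⁻¹) := fun z hz => by
  simpa using hasSum_geometric_of_abs_lt_one hz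

namespace HasGenFun

variable {a b : ℕ → ℝ} {f g : ℝ → ℝ}

theorem add (ha : HasGenFun a f) (hb : HasGenFun b g) :
    HasGenFun (fun n => a n + b n) (fun z => f z + g z) := fun z hz => by
  simpa only [add_mul] using (ha z hz).add (hb z hz)

theorem sub (ha : HasGenFun a f) (hb : HasGenFun b g) :
    HasGenFun (fun n => a n - b n) (fun z => f z - g z) := fun z hz => by
  simpa only [sub_mul] using (ha z hz).sub (hb z hz)

theorem const_mul (c : ℝ) (ha : HasGenFun a f) :
    HasGenFun (fun n => c * a n) (fun z => c * f z) := fun z hz => by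
  simpa only [mul_assoc] using (ha z hz).mul_left c

/-- Convergence on the whole disc forces absolute convergence: at `|z| < r < 1` the terms
`a n * r ^ n` are bounded, so `a n * z ^ n` is dominated by a geometric series. -/
theorem summable_norm (ha : HasGenFun a f) {z : ℝ} (hz : |z| < 1) :
    Summable (fun n => ‖a n * z ^ n‖) := by
  obtain ⟨r, hzr, hr1⟩ := exists_between hz
  have hr : 0 < r := (abs_nonneg z).trans_lt hzr
  obtain ⟨M, hM⟩ :=
    (ha r (by rwa [abs_of_pos hr])).summable.tendsto_atTop_zero.norm.bddAbove_range
  have hq : |z| / r < 1 := (div_lt_one hr).mpr hzr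
  refine .of_nonneg_of_le (fun _ => norm_nonneg _) (fun n => ?_)
    ((summable_geometric_of_lt_one (by positivity) hq).mul_left M)
  calc ‖a n * z ^ n‖ = ‖a n * r ^ n‖ * (|z| / r) ^ n := by
        simp only [norm_mul, norm_pow, Real.norm_eq_abs, abs_of_pos hr, div_pow]
        field_simp
    _ ≤ M * (|z| / r) ^ n := by gcongr; exact hM ⟨n, rfl⟩

theorem mul (ha : HasGenFun a f) (hb : HasGenFun b g) :
    HasGenFun (fun n => ∑ k ∈ range (n + 1), a k * b (n - k)) (fun z => f z * g z) :=
  fun z hz => by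
  have h := hasSum_sum_range_mul_of_summable_norm (ha.summable_norm hz) (hb.summable_norm hz)
  rw [(ha z hz).tsum_eq, (hb z hz).tsum_eq] at h
  refine h.congr_fun fun n => ?_
  rw [sum_mul]
  refine sum_congr rfl fun k hk => ?_
  rw [mul_mul_mul_comm, ← pow_add, Nat.add_sub_cancel' (mem_range_succ_iff.mp hk)]

theorem sum_range (ha : HasGenFun a f) :
    HasGenFun (fun n => ∑ k ∈ range (n + 1), a k) (fun z => f z * (1 - z)⁻¹) := by
  simpa using ha.mul hasGenFun_one_sub_inv

/-- Here `a (n - 1) / n` vanishes at `n = 0` since `x / 0 = 0` in Lean. -/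
theorem integral (ha : HasGenFun a f) :
    HasGenFun (fun n => a (n - 1) / n) (fun z => ∫ t in (0 : ℝ)..z, f t) := fun z hz => by
  have hdom : ∀ t ∈ Set.uIoc 0 z, |t| ≤ |z| := fun t ht => by
    rcases Set.mem_uIoc.mp ht with h | h
    · exact abs_le_abs_of_nonneg h.1.le h.2
    · exact abs_le_abs_of_nonpos h.2 h.1.le
  have hterm : HasSum (fun n => ∫ t in (0 : ℝ)..z, a n * t ^ n) (∫ t in (0 : ℝ)..z, f t) := by
    refine intervalIntegral.hasSum_integral_of_dominated_convergence
      (fun n _ => ‖a n‖ * |z| ^ n) (fun n => by fun_prop) (fun n => ?_)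
      (.of_forall fun _ _ => ?_) intervalIntegrable_const
      (.of_forall fun t ht => ha t ((hdom t ht).trans_lt hz))
    · refine .of_forall fun t ht => ?_
      rw [norm_mul, norm_pow, Real.norm_eq_abs]
      gcongr
      exact hdom t ht
    · simpa only [norm_mul, norm_pow, Real.norm_eq_abs] using ha.summable_norm hz
  refine (hasSum_nat_add_iff' 1).mp ?_
  simp only [sum_range_one, CharP.cast_eq_zero, div_zero, zero_mul, sub_zero]
  refine hterm.congr_fun fun n => ?_
  rw [intervalIntegral.integral_const_mul, integral_pow, Nat.add_sub_cancel]
  push_cast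
  ring

end HasGenFun

theorem hasGenFun_eval (p : ℝ[X]) : HasGenFun p.coeff (fun z => p.eval z) := fun z _ => by
  dsimp only
  rw [eval_eq_sum_range]
  exact hasSum_sum_of_ne_finset_zero fun n hn => by
    rw [coeff_eq_zero_of_natDegree_lt (by simpa using hn), zero_mul]

theorem hasGenFun_inv : HasGenFun (fun n => (n : ℝ)⁻¹) (fun z => -log (1 - z)) := fun z hz =>
  (hasSum_nat_add_iff' 1).mp <| by
    simpa [div_eq_inv_mul] using Real.hasSum_pow_div_log_of_abs_lt_one hz

theorem hasGenFun_neg_one_pow_div :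
    HasGenFun (fun n => (-1) ^ n / n) (fun z => -log (1 + z)) := fun z hz => by
  convert hasGenFun_inv (-z) (by rwa [abs_neg]) using 1
  · funext n
    rw [neg_pow]
    ring
  · ring_nf

theorem sum_Icc_eq_sum_range {M : Type*} [AddCommMonoid M] {f : ℕ → M} {m : ℕ}
    (hf : ∀ k < m, f k = 0) (n : ℕ) : ∑ k ∈ Icc m n, f k = ∑ k ∈ range (n + 1), f k :=
  sum_subset (fun k hk => by simp only [mem_Icc, mem_range] at hk ⊢; omega)
    fun k hk hk' => hf k (by simp only [mem_Icc, mem_range] at hk hk'; omega)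

theorem hasGenFun_H : HasGenFun H (fun z => -log (1 - z) * (1 - z)⁻¹) := by
  convert hasGenFun_inv.sum_range using 2 with n
  rw [H, ← sum_Icc_eq_sum_range (m := 1) (by simp)]
  simp

theorem hasGenFun_Halt : HasGenFun Halt (fun z => -log (1 + z) * (1 - z)⁻¹) := by
  convert hasGenFun_neg_one_pow_div.sum_range using 2 with n
  exact sum_Icc_eq_sum_range (m := 1) (by simp) n

theorem hasGenFun_log_sq :
    HasGenFun (fun n => ∑ k ∈ Icc 1 (n - 1), H k / ((n : ℝ) - k))
      (fun z => log (1 - z) ^ 2 * (1 - z)⁻¹) := by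
  convert hasGenFun_H.mul hasGenFun_inv using 1
  · funext n
    calc ∑ k ∈ Icc 1 (n - 1), H k / ((n : ℝ) - k)
        = ∑ k ∈ range (n + 1), H k / ((n : ℝ) - k) := by
          refine sum_subset (fun k hk => by simp only [mem_Icc, mem_range] at hk ⊢; omega)
            fun k hk hk' => ?_
          obtain rfl | rfl : k = 0 ∨ k = n := by simp only [mem_Icc, mem_range] at hk hk'; omega
          · simp [H]
          · simp
      _ = ∑ k ∈ range (n + 1), H k * ((n - k : ℕ) : ℝ)⁻¹ :=
          sum_congr rfl fun k hk => by
            rw [Nat.cast_sub (mem_range_succ_iff.mp hk), div_eq_mul_inv]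
  · ext z; ring

theorem hasGenFun_L2 : HasGenFun (fun n => Halt (n - 1) / n) L2 := by
  convert hasGenFun_Halt.integral using 2 with z
  simp [L2, div_eq_mul_inv, intervalIntegral.integral_neg]

theorem hasGenFun_L2_div :
    HasGenFun (fun n => ∑ k ∈ Icc 2 n, Halt (k - 1) / k) (fun z => L2 z * (1 - z)⁻¹) := by
  convert hasGenFun_L2.sum_range using 2 with n
  refine sum_Icc_eq_sum_range (fun k hk => ?_) n
  interval_cases k <;> simp [Halt]

theorem hasGenFun_log_div :
    HasGenFun (fun n => (1 - (-1) ^ n) / n) (fun z => log ((1 + z) / (1 - z))) := fun z hz => by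
  obtain ⟨hz₁, hz₂⟩ := abs_lt.mp hz
  dsimp only
  rw [log_div (by linarith) (by linarith)]
  convert (hasGenFun_inv.sub hasGenFun_neg_one_pow_div) z hz using 1
  · ext n; ring
  · ring

theorem sum_range_coeff_one_sub_X_sq_mul (a : ℕ → ℝ) {n : ℕ} (hn : 2 ≤ n) :
    ∑ k ∈ range (n + 1), ((1 - X) ^ 2 : ℝ[X]).coeff k * a (n - k) =
      a n - 2 * a (n - 1) + a (n - 2) := by
  obtain ⟨m, rfl⟩ := Nat.exists_eq_add_of_le' hn
  rw [sum_range_succ', sum_range_succ', sum_range_succ']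
  simp [sub_sq, coeff_X, coeff_one, coeff_X_pow]
  ring

theorem second_difference_log_div_coeff {n : ℕ} (hn : 2 ≤ n) :
    (1 - (-1) ^ n) / n - 2 * ((1 - (-1) ^ (n - 1)) / (n - 1 : ℕ))
      + (1 - (-1) ^ (n - 2)) / (n - 2 : ℕ) =
      (if Odd n then 2 / ((n : ℝ) - 2) else 0) - (if Even n then 4 / ((n : ℝ) - 1) else 0)
        + (if Odd n then 2 / (n : ℝ) else 0) := by
  rw [Nat.cast_sub (by omega : 1 ≤ n), Nat.cast_sub hn, Nat.cast_one, Nat.cast_ofNat]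
  rcases Nat.even_or_odd n with he | ho
  · have h₁ : Odd (n - 1) := Nat.Even.sub_odd (by omega) he odd_one
    have h₂ : Even (n - 2) := (Nat.even_sub hn).mpr (by simp [he])
    simp only [he.neg_one_pow, h₁.neg_one_pow, h₂.neg_one_pow, he, Nat.not_odd_iff_even.mpr he,
      if_true, if_false]
    ring
  · have h₁ : Even (n - 1) := Nat.Odd.sub_odd ho odd_one
    have h₂ : Odd (n - 2) := Nat.Odd.sub_even hn ho even_two
    simp only [ho.neg_one_pow, h₁.neg_one_pow, h₂.neg_one_pow, ho, Nat.not_even_iff_odd.mpr ho,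
      if_true, if_false]
    ring

noncomputable def clairvoyantPoly : ℝ[X] :=
  C (-1 / 72) - C (1 / 72) * (1 - X) + C (1 / 54) * (1 - X) ^ 2

/-- The coefficients of `clairvoyantSmallestGF`, read off summand by summand. -/
noncomputable def clairvoyantCoeff (n : ℕ) : ℝ :=
  9 / 4 * (n + 1)
  - 1 / 12 * ∑ k ∈ Icc 1 (n - 1), H k / ((n : ℝ) - k)
  + 1 / 6 * ∑ k ∈ Icc 2 n, Halt (k - 1) / k
  - 121 / 54
  - 7 / 3 * H n
  + 1 / 18 * (H n - Halt n)
  + clairvoyantPoly.coeff n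
  - 1 / 144 * ∑ k ∈ range (n + 1),
      ((1 - X) ^ 2 : ℝ[X]).coeff k * ((1 - (-1) ^ (n - k)) / (n - k : ℕ))

theorem hasGenFun_clairvoyantCoeff : HasGenFun clairvoyantCoeff clairvoyantSmallestGF := by
  have hsq : HasGenFun (fun n => n + 1) (fun z => (1 - z)⁻¹ * (1 - z)⁻¹) := by
    simpa using hasGenFun_one_sub_inv.sum_range
  have h := (((((((hsq.const_mul (9 / 4)).sub (hasGenFun_log_sq.const_mul (1 / 12))).add
    (hasGenFun_L2_div.const_mul (1 / 6))).sub (hasGenFun_one_sub_inv.const_mul (121 / 54))).sub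
    (hasGenFun_H.const_mul (7 / 3))).add ((hasGenFun_H.sub hasGenFun_Halt).const_mul (1 / 18))).add
    (hasGenFun_eval clairvoyantPoly)).sub
    (((hasGenFun_eval ((1 - X) ^ 2)).mul hasGenFun_log_div).const_mul (1 / 144))
  intro z hz
  obtain ⟨hz₁, hz₂⟩ := abs_lt.mp hz
  have hz₀ : 1 - z ≠ 0 := by linarith
  convert h z hz using 1
  · simp only [clairvoyantCoeff, mul_one]
  dsimp only
  rw [clairvoyantSmallestGF, clairvoyantPoly, log_div (by linarith) hz₀]
  simp only [eval_sub, eval_add, eval_mul, eval_C, eval_pow, eval_one, eval_X]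
  field_simp
  ring

theorem clairvoyantCoeff_eq {n : ℕ} (hn : 3 ≤ n) :
    clairvoyantCoeff n =
      9 / 4 * (n : ℝ)
      - 1 / 12 * ∑ k ∈ Finset.Icc 1 (n - 1), H k / ((n : ℝ) - (k : ℝ))
      + 1 / 6 * ∑ k ∈ Finset.Icc 2 n, Halt (k - 1) / (k : ℝ)
      - 41 / 18 * H n
      - 1 / 18 * Halt n
      + 1 / 108
      - (if Odd n then 1 / (72 * ((n : ℝ) - 2)) else 0)
      + (if Even n then 1 / (36 * ((n : ℝ) - 1)) else 0)
      - (if Odd n then 1 / (72 * (n : ℝ)) else 0) := by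
  have hdeg : clairvoyantPoly.natDegree ≤ 2 := by unfold clairvoyantPoly; compute_degree
  rw [clairvoyantCoeff, coeff_eq_zero_of_natDegree_lt (by omega),
    sum_range_coeff_one_sub_X_sq_mul (fun j => (1 - (-1) ^ j) / (j : ℝ)) (by omega),
    second_difference_log_div_coeff (by omega)]
  split_ifs <;> simp only [one_div, mul_inv] <;> ring

/-- The function `clairvoyantSmallestGF` has a power series
expansion `∑ c_n z^n` on `(−1,1)` whose coefficients, for `n ≥ 3`, equal the
stated exact average cost of selecting the smallest of `n` elements with the
"Clairvoyant" dual-pivot partitioning strategy. -/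
theorem clairvoyant_smallest_exact :
    ∃ c : ℕ → ℝ,
      (∀ z : ℝ, |z| < 1 → HasSum (fun n : ℕ => c n * z ^ n) (clairvoyantSmallestGF z)) ∧
      ∀ n : ℕ, 3 ≤ n →
        c n =
          9 / 4 * (n : ℝ)
          - 1 / 12 * ∑ k ∈ Finset.Icc 1 (n - 1), H k / ((n : ℝ) - (k : ℝ))
          + 1 / 6 * ∑ k ∈ Finset.Icc 2 n, Halt (k - 1) / (k : ℝ)
          - 41 / 18 * H n
          - 1 / 18 * Halt n
          + 1 / 108
          - (if Odd n then 1 / (72 * ((n : ℝ) - 2)) else 0)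
          + (if Even n then 1 / (36 * ((n : ℝ) - 1)) else 0)
          - (if Odd n then 1 / (72 * (n : ℝ)) else 0) :=
  ⟨clairvoyantCoeff, hasGenFun_clairvoyantCoeff, fun _ => clairvoyantCoeff_eq⟩
end

section
/- For every natural number n ≥ 2, the sum over all triples (s,m,ℓ) of natural numbers with s + m + ℓ = n − 2 of the quantity s + 2m + 2ℓ equals binom(n,2)·(5/3)·(n−2); consequently, 1 + (1/binom(n,2))·∑_{(s,m,ℓ): s+m+ℓ=n−2} (s + 2m + 2ℓ) = (5/3)·n − 7/3. (This is the expected number of key comparisons used by the dual-pivot partitioning strategy 'smaller pivot first' to classify a list of n elements, two of which are the pivots.) -/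
/-!
Permuting coordinates preserves the set of triples `(s, m, ℓ)` with `s + m + ℓ = k`, so each
coordinate has the same sum over it, namely `k / 3` times the number of triples. That number is
`binom(k + 2, 2)`: the triples with first coordinate `s` form an antidiagonal of size `k - s + 1`.
With `k = n - 2`, the sum of `s + 2m + 2ℓ` is therefore `5 · (k / 3) · binom(n, 2)`.
-/

open Finset

def triplesWithSum (N k : ℕ) : Finset (ℕ × ℕ × ℕ) :=
  (range N ×ˢ range N ×ˢ range N).filter fun x => x.1 + x.2.1 + x.2.2 = k

namespace triplesWithSum

variable {N k : ℕ}

@[simp]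
theorem mem {x : ℕ × ℕ × ℕ} :
    x ∈ triplesWithSum N k ↔ (x.1 < N ∧ x.2.1 < N ∧ x.2.2 < N) ∧ x.1 + x.2.1 + x.2.2 = k := by
  simp [triplesWithSum]

theorem sum_comp_mid {M : Type*} [AddCommMonoid M] (f : ℕ → M) :
    ∑ x ∈ triplesWithSum N k, f x.2.1 = ∑ x ∈ triplesWithSum N k, f x.1 :=
  sum_nbij' (fun x => (x.2.1, x.1, x.2.2)) (fun x => (x.2.1, x.1, x.2.2))
    (by intro x; simp; omega) (by intro x; simp; omega) (by simp) (by simp) (by simp)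

theorem sum_comp_last {M : Type*} [AddCommMonoid M] (f : ℕ → M) :
    ∑ x ∈ triplesWithSum N k, f x.2.2 = ∑ x ∈ triplesWithSum N k, f x.1 :=
  sum_nbij' (fun x => (x.2.2, x.2.1, x.1)) (fun x => (x.2.2, x.2.1, x.1))
    (by intro x; simp; omega) (by intro x; simp; omega) (by simp) (by simp) (by simp)

theorem three_mul_sum_fst (N k : ℕ) :
    3 * ∑ x ∈ triplesWithSum N k, x.1 = k * #(triplesWithSum N k) := by
  calc 3 * ∑ x ∈ triplesWithSum N k, x.1
      = ∑ x ∈ triplesWithSum N k, (x.1 + x.2.1 + x.2.2) := by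
        rw [sum_add_distrib, sum_add_distrib, sum_comp_mid (M := ℕ) fun m => m,
          sum_comp_last (M := ℕ) fun m => m]
        ring
    _ = k * #(triplesWithSum N k) := by
        rw [sum_congr rfl fun x hx => (mem.1 hx).2, sum_const, smul_eq_mul, mul_comm]

theorem card_filter_fst_eq (hk : k < N) {s : ℕ} (hs : s ≤ k) :
    #{x ∈ triplesWithSum N k | x.1 = s} = k - s + 1 := by
  rw [← Nat.card_antidiagonal (k - s)]
  refine card_nbij' (fun x => x.2) (fun q => (s, q)) ?_ ?_ ?_ ?_
  · intro x; simp; omega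
  · intro q; simp; omega
  · intro x hx
    rw [← (mem_filter.1 hx).2]
  · intro q; simp

theorem card_eq_choose (hk : k < N) : #(triplesWithSum N k) = (k + 2).choose 2 := by
  rw [card_eq_sum_card_fiberwise (f := Prod.fst) (t := range (k + 1)) (by intro x; simp; omega)]
  calc ∑ s ∈ range (k + 1), #{x ∈ triplesWithSum N k | x.1 = s}
      = ∑ s ∈ range (k + 1), (k - s + 1) :=
        sum_congr rfl fun s hs => card_filter_fst_eq hk (Nat.lt_succ_iff.1 (mem_range.1 hs))
    _ = ∑ i ∈ range (k + 1), (i + 1) := by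
        rw [← sum_range_reflect]
        exact sum_congr rfl fun i hi => by simp at hi; omega
    _ = ∑ i ∈ range (k + 2), i := (sum_range_succ' (fun i => i) (k + 1)).symm
    _ = (k + 2).choose 2 := by rw [sum_range_id, Nat.choose_two_right]

theorem sum_cost (hk : k < N) :
    ∑ x ∈ triplesWithSum N k, ((x.1 : ℝ) + 2 * (x.2.1 : ℝ) + 2 * (x.2.2 : ℝ)) =
      5 / 3 * k * (k + 2).choose 2 := by
  have h3 : 3 * ∑ x ∈ triplesWithSum N k, (x.1 : ℝ) = k * (k + 2).choose 2 := by
    exact_mod_cast card_eq_choose hk ▸ three_mul_sum_fst N k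
  rw [sum_add_distrib, sum_add_distrib, ← mul_sum, ← mul_sum,
    sum_comp_mid (fun m => (m : ℝ)), sum_comp_last (fun m => (m : ℝ))]
  linarith

end triplesWithSum

/-- For `n ≥ 2`,
`∑_{(s,m,ℓ) ∈ ℕ³, s+m+ℓ=n−2} (s + 2m + 2ℓ) = binom(n,2)·(5/3)·(n−2)`, and
consequently `1 + (1/binom(n,2))·∑_{(s,m,ℓ)} (s + 2m + 2ℓ) = (5/3)·n − 7/3`.
(This is the expected number of key comparisons of the dual-pivot partitioning
strategy "smaller pivot first" on a list of `n` elements.) -/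
theorem spf_partition_cost (n : ℕ) (hn : 2 ≤ n) :
    (∑ x ∈ (Finset.range n ×ˢ Finset.range n ×ˢ Finset.range n).filter
        (fun x : ℕ × ℕ × ℕ => x.1 + x.2.1 + x.2.2 = n - 2),
        ((x.1 : ℝ) + 2 * (x.2.1 : ℝ) + 2 * (x.2.2 : ℝ))) =
      (n.choose 2 : ℝ) * (5 / 3) * ((n : ℝ) - 2) ∧
    1 + (1 / (n.choose 2 : ℝ)) *
        (∑ x ∈ (Finset.range n ×ˢ Finset.range n ×ˢ Finset.range n).filter
          (fun x : ℕ × ℕ × ℕ => x.1 + x.2.1 + x.2.2 = n - 2),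
          ((x.1 : ℝ) + 2 * (x.2.1 : ℝ) + 2 * (x.2.2 : ℝ))) =
      5 / 3 * (n : ℝ) - 7 / 3 := by
  obtain ⟨k, rfl⟩ : ∃ k, n = k + 2 := ⟨n - 2, by omega⟩
  have hcost := triplesWithSum.sum_cost (N := k + 2) (k := k) (by omega)
  have hchoose : ((k + 2).choose 2 : ℝ) = (k + 2) * (k + 1) / 2 := by
    rw [Nat.cast_choose_two]; push_cast; ring
  simp only [triplesWithSum, Nat.add_sub_cancel] at hcost ⊢
  rw [hcost, hchoose]
  push_cast
  constructor
  · ring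
  · field_simp
    ring
end

section
/- For every real z with |z| < 1: the series ∑_{m≥1} H^alt_m·z^m converges to −log(1+z)/(1−z), and the series ∑_{m≥1} (H^alt_{m−1}/m)·z^m converges to L₂(z) = −∫₀^z log(1+t)/(1−t) dt. -/
open Finset

/-!
Writing `H^alt_n = ∑_{k ≤ n} (-1)^k / k`, the first series is the Cauchy product of
`∑_{k ≥ 1} (-z)^k / k = -log (1 + z)` with the geometric series `∑ z^n = 1 / (1 - z)`.
Since `|H^alt_n| ≤ n`, that power series is dominated by `∑ n |z|^n` on `[-|z|, |z|]`, so it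
may be integrated term by term from `0` to `z`; reindexing by `m = n + 1` gives the second.
-/

/-- The `k = 0` term is `1 / 0 = 0`. -/
lemma Halt_eq_sum_range (n : ℕ) : Halt n = ∑ k ∈ range (n + 1), (-1 : ℝ) ^ k / k := by
  rw [range_eq_Ico, sum_eq_sum_Ico_succ_bot (Nat.succ_pos n)]
  simp only [Halt, Nat.cast_zero, div_zero, zero_add]
  rfl

lemma abs_neg_one_pow_div_natCast_le_one (k : ℕ) : |(-1 : ℝ) ^ k / k| ≤ 1 := by
  rw [abs_div, abs_pow, abs_neg, abs_one, one_pow, Nat.abs_cast, one_div]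
  exact Nat.cast_inv_le_one k

lemma abs_Halt_le (n : ℕ) : |Halt n| ≤ n :=
  calc |Halt n| ≤ ∑ k ∈ Icc 1 n, |(-1 : ℝ) ^ k / k| := abs_sum_le_sum_abs _ _
    _ ≤ ∑ _k ∈ Icc 1 n, (1 : ℝ) := sum_le_sum fun k _ => abs_neg_one_pow_div_natCast_le_one k
    _ = n := by simp

theorem hasSum_sum_range_mul_pow {𝕜 : Type*} [NormedField 𝕜] [CompleteSpace 𝕜]
    {c : ℕ → 𝕜} {z s : 𝕜} (hz : ‖z‖ < 1) (hc : Summable fun k => ‖c k * z ^ k‖)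
    (hs : HasSum (fun k => c k * z ^ k) s) :
    HasSum (fun n => (∑ k ∈ range (n + 1), c k) * z ^ n) (s / (1 - z)) := by
  have hgeom : Summable fun n => ‖z ^ n‖ := by
    simpa [norm_pow] using summable_geometric_of_lt_one (norm_nonneg z) hz
  have hprod := hasSum_sum_range_mul_of_summable_norm hc hgeom
  rw [hs.tsum_eq, tsum_geometric_of_norm_lt_one hz, ← div_eq_mul_inv] at hprod
  refine hprod.congr_fun fun n => ?_
  rw [sum_mul]
  refine sum_congr rfl fun k hk => ?_
  rw [mul_assoc, pow_mul_pow_sub z (Nat.lt_succ_iff.mp (mem_range.mp hk))]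

lemma hasSum_neg_one_pow_div_mul_pow {z : ℝ} (hz : |z| < 1) :
    HasSum (fun k : ℕ => (-1) ^ k / k * z ^ k) (-Real.log (1 + z)) := by
  have hlog := Real.hasSum_pow_div_log_of_abs_lt_one (x := -z) (by rwa [abs_neg])
  rw [sub_neg_eq_add] at hlog
  refine (hasSum_nat_add_iff' 1).mp ?_
  simpa [← mul_pow, div_mul_eq_mul_div] using hlog

lemma summable_norm_neg_one_pow_div_mul_pow {z : ℝ} (hz : |z| < 1) :
    Summable fun k : ℕ => ‖(-1) ^ k / k * z ^ k‖ := by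
  refine .of_nonneg_of_le (fun _ => norm_nonneg _) (fun k => ?_)
    (summable_geometric_of_lt_one (abs_nonneg z) hz)
  rw [Real.norm_eq_abs, abs_mul, abs_pow]
  exact mul_le_of_le_one_left (by positivity) (abs_neg_one_pow_div_natCast_le_one k)

lemma hasSum_Halt_mul_pow {z : ℝ} (hz : |z| < 1) :
    HasSum (fun m : ℕ => Halt m * z ^ m) (-Real.log (1 + z) / (1 - z)) := by
  simpa only [Halt_eq_sum_range] using hasSum_sum_range_mul_pow (by rwa [Real.norm_eq_abs])
    (summable_norm_neg_one_pow_div_mul_pow hz) (hasSum_neg_one_pow_div_mul_pow hz)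

lemma summable_abs_Halt_mul_pow {z : ℝ} (hz : |z| < 1) :
    Summable fun n => |Halt n| * |z| ^ n :=
  .of_nonneg_of_le (fun _ => by positivity)
    (fun n => mul_le_mul_of_nonneg_right (abs_Halt_le n) (by positivity))
    (by simpa using summable_pow_mul_geometric_of_norm_lt_one 1 (r := |z|) (by simpa using hz))

theorem hasSum_integral_of_hasSum_mul_pow {c : ℕ → ℝ} {F : ℝ → ℝ} {z : ℝ}
    (hc : Summable fun n => |c n| * |z| ^ n)
    (hF : ∀ t, |t| ≤ |z| → HasSum (fun n => c n * t ^ n) (F t)) :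
    HasSum (fun n => c n * (z ^ (n + 1) / (n + 1))) (∫ t in (0 : ℝ)..z, F t) := by
  have hmem : ∀ t ∈ Set.uIoc 0 z, |t| ≤ |z| := fun t ht => by
    simpa using Set.abs_sub_left_of_mem_uIcc (Set.uIoc_subset_uIcc ht)
  have hint := intervalIntegral.hasSum_integral_of_dominated_convergence
    (F := fun n t => c n * t ^ n) (fun n _ => |c n| * |z| ^ n)
    (fun n => (continuous_const.mul (continuous_pow n)).aestronglyMeasurable)
    (fun n => .of_forall fun t ht => by
      rw [Real.norm_eq_abs, abs_mul, abs_pow]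
      exact mul_le_mul_of_nonneg_left (pow_le_pow_left₀ (abs_nonneg t) (hmem t ht) n)
        (abs_nonneg _))
    (.of_forall fun _ _ => hc) (intervalIntegrable_const (μ := MeasureTheory.volume))
    (.of_forall fun t ht => hF t (hmem t ht))
  refine hint.congr_fun fun n => ?_
  simp [intervalIntegral.integral_const_mul, integral_pow]

/-- For `|z| < 1`, `∑_{m≥1} H^alt_m·z^m = −log(1+z)/(1−z)` and
`∑_{m≥1} (H^alt_{m−1}/m)·z^m = L₂(z)`.  (Both summands vanish at `m = 0`, so the
sums are taken over all of `ℕ`.) -/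
theorem alt_harmonic_gf (z : ℝ) (hz : |z| < 1) :
    HasSum (fun m : ℕ => Halt m * z ^ m) (-(Real.log (1 + z)) / (1 - z)) ∧
    HasSum (fun m : ℕ => Halt (m - 1) / (m : ℝ) * z ^ m) (L2 z) := by
  refine ⟨hasSum_Halt_mul_pow hz, ?_⟩
  have hint := hasSum_integral_of_hasSum_mul_pow (summable_abs_Halt_mul_pow hz)
    fun t ht => hasSum_Halt_mul_pow (ht.trans_lt hz)
  rw [intervalIntegral.integral_congr (g := fun t => -(Real.log (1 + t) / (1 - t)))
    (fun t _ => neg_div _ _), intervalIntegral.integral_neg, ← L2] at hint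
  refine (hasSum_nat_add_iff' 1).mp ?_
  simpa [div_mul_eq_mul_div, mul_div_assoc] using hint
end
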